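/- arXiv:2209.02621 — 2 statements merged into one kernel-verified Lean document; each statement's English description precedes it below -/
import Mathlib

section
/- The generalized incompatibility robustness of any pair of instruments is lower bounded by the generalized incompatibility robustness of their induced POVMs: R_I(I₁,I₂) ≥ R_M(A₁,A₂), where A_i is the POVM induced by I_i. -/
open Matrix
open scoped Kronecker BigOperators ComplexOrder

noncomputable section

namespace QI

/-- Linear maps between matrix algebras (superoperators). -/
abbrev MatMap (n m : Type*) [Fintype n] [Fintype m] :=
  Matrix n n ℂ →ₗ[ℂ] Matrix m m ℂ

variable {n m m₁ m₂ ι ι₁ ι₂ : Type*}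

/-- The Choi matrix of a superoperator. -/
def choi [Fintype n] [DecidableEq n] [Fintype m] (Φ : MatMap n m) :
    Matrix (n × m) (n × m) ℂ :=
  Matrix.of fun p q => Φ (Matrix.single p.1 q.1 1) p.2 q.2

/-- Complete positivity, via positive semidefiniteness of the Choi matrix. -/
def IsCP [Fintype n] [DecidableEq n] [Fintype m] (Φ : MatMap n m) : Prop :=
  (choi Φ).PosSemidef

/-- Trace preserving map. -/
def IsTP [Fintype n] [Fintype m] (Φ : MatMap n m) : Prop :=
  ∀ ρ, (Φ ρ).trace = ρ.trace

/-- Trace non-increasing map (on positive semidefinite inputs). -/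
def IsTNI [Fintype n] [Fintype m] (Φ : MatMap n m) : Prop :=
  ∀ ρ : Matrix n n ℂ, ρ.PosSemidef → (Φ ρ).trace.re ≤ ρ.trace.re

/-- A quantum channel: CP and trace preserving. -/
def IsChannel [Fintype n] [DecidableEq n] [Fintype m] (Φ : MatMap n m) : Prop :=
  IsCP Φ ∧ IsTP Φ

/-- A quantum instrument: a finite family of CP maps summing to a TP map. -/
structure Instrument (ι n m : Type*) [Fintype ι] [Fintype n] [DecidableEq n] [Fintype m] where
  op : ι → MatMap n m
  cp : ∀ x, IsCP (op x)
  tp : IsTP (∑ x, op x)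

/-- Partial trace over the second tensor factor, as a linear map. -/
def ptrace₂ [Fintype m₁] [Fintype m₂] :
    Matrix (m₁ × m₂) (m₁ × m₂) ℂ →ₗ[ℂ] Matrix m₁ m₁ ℂ where
  toFun M := Matrix.of fun i j => ∑ k, M (i, k) (j, k)
  map_add' M N := by ext i j; simp [Finset.sum_add_distrib]
  map_smul' c M := by ext i j; simp [Finset.mul_sum]

/-- Partial trace over the first tensor factor, as a linear map. -/
def ptrace₁ [Fintype m₁] [Fintype m₂] :
    Matrix (m₁ × m₂) (m₁ × m₂) ℂ →ₗ[ℂ] Matrix m₂ m₂ ℂ where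
  toFun M := Matrix.of fun i j => ∑ k, M (k, i) (k, j)
  map_add' M N := by ext i j; simp [Finset.sum_add_distrib]
  map_smul' c M := by ext i j; simp [Finset.mul_sum]

/-- Parallel compatibility of two instruments. -/
def ParallelCompatible [Fintype ι₁] [Fintype ι₂] [Fintype n] [DecidableEq n]
    [Fintype m₁] [Fintype m₂]
    (I₁ : Instrument ι₁ n m₁) (I₂ : Instrument ι₂ n m₂) : Prop :=
  ∃ J : Instrument (ι₁ × ι₂) n (m₁ × m₂),
    (∀ x, ∑ y, ptrace₂ ∘ₗ J.op (x, y) = I₁.op x) ∧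
    (∀ y, ∑ x, ptrace₁ ∘ₗ J.op (x, y) = I₂.op y)

/-- The dual (Heisenberg picture) of a superoperator, characterized by
`tr[Φ(ρ) M] = tr[ρ Φ*(M)]`. -/
def dualMap [Fintype n] [DecidableEq n] [Fintype m] (Φ : MatMap n m) (M : Matrix m m ℂ) :
    Matrix n n ℂ :=
  Matrix.of fun i j => (Φ (Matrix.single j i 1) * M).trace

/-- A POVM: positive semidefinite effects summing to the identity. -/
def IsPOVM [Fintype n] [DecidableEq n] (A : ι → Matrix n n ℂ) [Fintype ι] : Prop :=
  (∀ x, (A x).PosSemidef) ∧ ∑ x, A x = 1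

/-- The POVM induced by an instrument: `A(x) = Φ_x*(𝟙)`. -/
def inducedPOVM [Fintype ι] [Fintype n] [DecidableEq n] [Fintype m] [DecidableEq m]
    (I : Instrument ι n m) (x : ι) : Matrix n n ℂ :=
  dualMap (I.op x) 1

/-- Compatibility of two POVMs via a joint POVM. -/
def POVMsCompatible [Fintype ι₁] [Fintype ι₂] [Fintype n] [DecidableEq n]
    (A₁ : ι₁ → Matrix n n ℂ) (A₂ : ι₂ → Matrix n n ℂ) : Prop :=
  ∃ G : ι₁ × ι₂ → Matrix n n ℂ, IsPOVM G ∧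
    (∀ x, ∑ y, G (x, y) = A₁ x) ∧ (∀ y, ∑ x, G (x, y) = A₂ y)

/-- Compatibility of two channels via a joint channel. -/
def ChannelsCompatible [Fintype n] [DecidableEq n] [Fintype m₁] [Fintype m₂]
    (Φ₁ : MatMap n m₁) (Φ₂ : MatMap n m₂) : Prop :=
  ∃ Λ : MatMap n (m₁ × m₂), IsChannel Λ ∧
    ptrace₂ ∘ₗ Λ = Φ₁ ∧ ptrace₁ ∘ₗ Λ = Φ₂

/-- Generalized incompatibility robustness of a pair of instruments. -/
def RI [Fintype ι₁] [Fintype ι₂] [Fintype n] [DecidableEq n]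
    [Fintype m₁] [Fintype m₂]
    (I₁ : Instrument ι₁ n m₁) (I₂ : Instrument ι₂ n m₂) : ℝ :=
  sInf {r : ℝ | 0 ≤ r ∧
    ∃ (N₁ : Instrument ι₁ n m₁) (N₂ : Instrument ι₂ n m₂)
      (J : Instrument (ι₁ × ι₂) n (m₁ × m₂)),
      (∀ x, ((1 + r : ℝ) : ℂ)⁻¹ • (I₁.op x + (r : ℂ) • N₁.op x)
          = ∑ y, ptrace₂ ∘ₗ J.op (x, y)) ∧
      (∀ y, ((1 + r : ℝ) : ℂ)⁻¹ • (I₂.op y + (r : ℂ) • N₂.op y)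
          = ∑ x, ptrace₁ ∘ₗ J.op (x, y))}

/-- Generalized incompatibility robustness of a pair of POVMs. -/
def RM [Fintype ι₁] [Fintype ι₂] [Fintype n] [DecidableEq n]
    (A₁ : ι₁ → Matrix n n ℂ) (A₂ : ι₂ → Matrix n n ℂ) : ℝ :=
  sInf {r : ℝ | 0 ≤ r ∧
    ∃ (B₁ : ι₁ → Matrix n n ℂ) (B₂ : ι₂ → Matrix n n ℂ) (G : ι₁ × ι₂ → Matrix n n ℂ),
      IsPOVM B₁ ∧ IsPOVM B₂ ∧ (∀ p, (G p).PosSemidef) ∧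
      (∀ x, ((1 + r : ℝ) : ℂ)⁻¹ • (A₁ x + (r : ℂ) • B₁ x) = ∑ y, G (x, y)) ∧
      (∀ y, ((1 + r : ℝ) : ℂ)⁻¹ • (A₂ y + (r : ℂ) • B₂ y) = ∑ x, G (x, y))}

/-- Generalized incompatibility robustness of a pair of channels. -/
def RC [Fintype n] [DecidableEq n] [Fintype m₁] [Fintype m₂]
    (Φ₁ : MatMap n m₁) (Φ₂ : MatMap n m₂) : ℝ :=
  sInf {r : ℝ | 0 ≤ r ∧
    ∃ (N₁ : MatMap n m₁) (N₂ : MatMap n m₂) (Λ : MatMap n (m₁ × m₂)),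
      IsChannel N₁ ∧ IsChannel N₂ ∧ IsChannel Λ ∧
      ((1 + r : ℝ) : ℂ)⁻¹ • (Φ₁ + (r : ℂ) • N₁) = ptrace₂ ∘ₗ Λ ∧
      ((1 + r : ℝ) : ℂ)⁻¹ • (Φ₂ + (r : ℂ) • N₂) = ptrace₁ ∘ₗ Λ}

/-- Post-processing relation on instruments: `I₂ ≲ I₁`. -/
def PostProcessingOf [Fintype ι₁] [Fintype ι₂] [Fintype n] [DecidableEq n]
    [Fintype m₁] [DecidableEq m₁] [Fintype m₂]
    (I₂ : Instrument ι₂ n m₂) (I₁ : Instrument ι₁ n m₁) : Prop :=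
  ∃ R : ι₁ → Instrument ι₂ m₁ m₂,
    ∀ y, I₂.op y = ∑ x, (R x).op y ∘ₗ I₁.op x

/-- A density matrix (quantum state). -/
def IsState [Fintype m] (η : Matrix m m ℂ) : Prop :=
  η.PosSemidef ∧ η.trace = 1

/-- A pure state. -/
def IsPureState [Fintype m] (η : Matrix m m ℂ) : Prop :=
  ∃ v : m → ℂ, (∑ i, star (v i) * v i) = 1 ∧ η = Matrix.vecMulVec v (star v)

/-- The trash-and-prepare map `ρ ↦ tr(ρ) • η`. -/
def trashPrep [Fintype n] [Fintype m] (η : Matrix m m ℂ) : MatMap n m :=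
  (Matrix.traceLinearMap n ℂ ℂ).smulRight η

/-- Tensoring with a fixed matrix on the right, as a linear map. -/
def kronRight [Fintype m₁] [Fintype m₂] (B : Matrix m₂ m₂ ℂ) :
    Matrix m₁ m₁ ℂ →ₗ[ℂ] Matrix (m₁ × m₂) (m₁ × m₂) ℂ where
  toFun A := A ⊗ₖ B
  map_add' A A' := by ext ⟨i, k⟩ ⟨j, l⟩; simp [Matrix.kroneckerMap_apply, add_mul]
  map_smul' c A := by ext ⟨i, k⟩ ⟨j, l⟩; simp [Matrix.kroneckerMap_apply, mul_assoc]

/-- Tensoring with a fixed matrix on the left, as a linear map. -/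
def kronLeft [Fintype m₁] [Fintype m₂] (A : Matrix m₁ m₁ ℂ) :
    Matrix m₂ m₂ ℂ →ₗ[ℂ] Matrix (m₁ × m₂) (m₁ × m₂) ℂ where
  toFun B := A ⊗ₖ B
  map_add' B B' := by ext ⟨i, k⟩ ⟨j, l⟩; simp [Matrix.kroneckerMap_apply, mul_add]
  map_smul' c B := by
    ext ⟨i, k⟩ ⟨j, l⟩
    simp only [Matrix.kroneckerMap_apply, Matrix.smul_apply, smul_eq_mul, RingHom.id_apply]
    ring

/-- Measure-and-prepare operation: `ρ ↦ tr(ρ A) • σ`. -/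
def mpOp [Fintype n] [Fintype m] (A : Matrix n n ℂ) (σ : Matrix m m ℂ) : MatMap n m where
  toFun ρ := (ρ * A).trace • σ
  map_add' ρ ρ' := by simp [Matrix.add_mul, Matrix.trace_add, add_smul]
  map_smul' c ρ := by simp [Matrix.smul_mul, Matrix.trace_smul, smul_smul]

/-- Conjugation by a Kraus operator: `ρ ↦ K ρ K†`. -/
def krausOp [Fintype n] [Fintype m] (K : Matrix m n ℂ) : MatMap n m where
  toFun ρ := K * ρ * Kᴴ
  map_add' ρ ρ' := by simp [Matrix.mul_add, Matrix.add_mul]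
  map_smul' c ρ := by simp [Matrix.mul_smul, Matrix.smul_mul]

end QI

end

/-!
Applying `Φ ↦ Φ*(𝟙)` to a noisy parallel-compatible pair of instruments yields, because partial
traces are trace preserving, a noisy compatible pair of POVMs with the same noise parameter `r`
(and noise POVMs induced by the noise instruments). Hence every `r` feasible for `R_I` is feasible
for `R_M`. Comparing the infima also needs the feasible set of `R_I` to be nonempty (`sInf ∅ = 0`):
`r = 1` works, with the joint instrument that with probability `½` runs `I₁` and appends a fixed
state, and otherwise runs `I₂` and prepends one.
-/

theorem LinearMap.comp_finsetSum {R M N P ι : Type*} [CommSemiring R] [AddCommMonoid M]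
    [AddCommMonoid N] [AddCommMonoid P] [Module R M] [Module R N] [Module R P] (s : Finset ι)
    (g : N →ₗ[R] P) (f : ι → M →ₗ[R] N) : g ∘ₗ ∑ i ∈ s, f i = ∑ i ∈ s, g ∘ₗ f i :=
  map_sum (LinearMap.llcomp R M N P g) f s

namespace QI

variable {n m m₁ m₂ ι ι₁ ι₂ : Type*}

section CompletePositivity

variable [Fintype n] [DecidableEq n] [Fintype m]

def choiₗ : MatMap n m →ₗ[ℂ] Matrix (n × m) (n × m) ℂ where
  toFun := choi
  map_add' Φ Ψ := by ext; simp [choi]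
  map_smul' c Φ := by ext; simp [choi]

lemma choiₗ_apply (Φ : MatMap n m) : choiₗ Φ = choi Φ := rfl

lemma isCP_zero : IsCP (0 : MatMap n m) := by
  rw [IsCP, ← choiₗ_apply, map_zero]
  exact .zero

lemma IsCP.add {Φ Ψ : MatMap n m} (hΦ : IsCP Φ) (hΨ : IsCP Ψ) : IsCP (Φ + Ψ) := by
  rw [IsCP, ← choiₗ_apply, map_add]
  exact PosSemidef.add hΦ hΨ

lemma IsCP.smul {Φ : MatMap n m} (hΦ : IsCP Φ) {c : ℂ} (hc : 0 ≤ c) : IsCP (c • Φ) := by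
  rw [IsCP, ← choiₗ_apply, map_smul]
  exact PosSemidef.smul hΦ hc

lemma isCP_ite {p : Prop} [Decidable p] {Φ : MatMap n m} (hΦ : IsCP Φ) :
    IsCP (if p then Φ else 0) := by
  split_ifs
  exacts [hΦ, isCP_zero]

lemma choi_trashPrep (η : Matrix m m ℂ) : choi (trashPrep η : MatMap n m) = 1 ⊗ₖ η := by
  ext ⟨i, a⟩ ⟨j, b⟩
  by_cases h : i = j <;> simp [choi, trashPrep, h]

lemma isCP_trashPrep {η : Matrix m m ℂ} (hη : η.PosSemidef) : IsCP (trashPrep η : MatMap n m) := by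
  rw [IsCP, choi_trashPrep]
  exact PosSemidef.one.kronecker hη

lemma IsCP.kronRight_comp [Fintype m₂] {Φ : MatMap n m} (hΦ : IsCP Φ) {B : Matrix m₂ m₂ ℂ}
    (hB : B.PosSemidef) : IsCP (kronRight B ∘ₗ Φ) := by
  have : choi (kronRight B ∘ₗ Φ) = (choi Φ ⊗ₖ B).submatrix (Equiv.prodAssoc n m m₂).symm
      (Equiv.prodAssoc n m m₂).symm := by
    ext ⟨i, a, b⟩ ⟨j, a', b'⟩
    simp [choi, kronRight]
  rw [IsCP, this]
  exact (hΦ.kronecker hB).submatrix _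

lemma IsCP.kronLeft_comp [Fintype m₁] {Φ : MatMap n m} (hΦ : IsCP Φ) {A : Matrix m₁ m₁ ℂ}
    (hA : A.PosSemidef) : IsCP (kronLeft A ∘ₗ Φ) := by
  have : choi (kronLeft A ∘ₗ Φ) = (A ⊗ₖ choi Φ).submatrix (fun p => (p.2.1, p.1, p.2.2))
      (fun p => (p.2.1, p.1, p.2.2)) := by
    ext ⟨i, a, b⟩ ⟨j, a', b'⟩
    simp [choi, kronLeft]
  rw [IsCP, this]
  exact (hA.kronecker hΦ).submatrix _

end CompletePositivity

section TracePreservation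

lemma IsTP.comp [Fintype n] [Fintype m] [Fintype m₁] {Ψ : MatMap m m₁} {Φ : MatMap n m}
    (hΨ : IsTP Ψ) (hΦ : IsTP Φ) : IsTP (Ψ ∘ₗ Φ) := fun ρ => (hΨ _).trans (hΦ ρ)

lemma IsTP.ne_zero [Fintype n] [DecidableEq n] [Nonempty n] [Fintype m] {Φ : MatMap n m}
    (hΦ : IsTP Φ) : Φ ≠ 0 := by
  rintro rfl
  simpa using (hΦ 1).symm

lemma trace_trashPrep [Fintype n] [Fintype m] (η : Matrix m m ℂ) (ρ : Matrix n n ℂ) :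
    (trashPrep η ρ).trace = ρ.trace * η.trace := by
  simp [trashPrep]

lemma trashPrep_comp_of_isTP [Fintype n] [Fintype m] [Fintype m₁] (η : Matrix m₁ m₁ ℂ)
    {Φ : MatMap n m} (hΦ : IsTP Φ) : trashPrep η ∘ₗ Φ = trashPrep η := by
  ext ρ : 1
  simp [trashPrep, hΦ ρ]

variable [Fintype m₁] [Fintype m₂]

lemma isTP_ptrace₂ : IsTP (ptrace₂ : MatMap (m₁ × m₂) m₁) := by
  intro M
  simp [ptrace₂, Matrix.trace, Fintype.sum_prod_type]

lemma isTP_ptrace₁ : IsTP (ptrace₁ : MatMap (m₁ × m₂) m₂) := by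
  intro M
  simp only [ptrace₁, Matrix.trace, Fintype.sum_prod_type]
  exact Finset.sum_comm

lemma isTP_kronRight {B : Matrix m₂ m₂ ℂ} (hB : B.trace = 1) :
    IsTP (kronRight B : MatMap m₁ (m₁ × m₂)) := by
  intro A
  simp [kronRight, trace_kronecker, hB]

lemma isTP_kronLeft {A : Matrix m₁ m₁ ℂ} (hA : A.trace = 1) :
    IsTP (kronLeft A : MatMap m₂ (m₁ × m₂)) := by
  intro B
  simp [kronLeft, trace_kronecker, hA]

lemma ptrace₂_comp_kronRight (B : Matrix m₂ m₂ ℂ) :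
    ptrace₂ ∘ₗ (kronRight B : MatMap m₁ (m₁ × m₂)) = B.trace • LinearMap.id := by
  ext A : 1; ext i j
  simp [ptrace₂, kronRight, Matrix.trace, Finset.mul_sum, mul_comm]

lemma ptrace₁_comp_kronLeft (A : Matrix m₁ m₁ ℂ) :
    ptrace₁ ∘ₗ (kronLeft A : MatMap m₂ (m₁ × m₂)) = A.trace • LinearMap.id := by
  ext B : 1; ext i j
  simp [ptrace₁, kronLeft, Matrix.trace, Finset.sum_mul]

lemma ptrace₁_comp_kronRight (B : Matrix m₂ m₂ ℂ) :
    ptrace₁ ∘ₗ (kronRight B : MatMap m₁ (m₁ × m₂)) = trashPrep B := by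
  ext A : 1; ext i j
  simp [ptrace₁, kronRight, trashPrep, Matrix.trace, Finset.sum_mul]

lemma ptrace₂_comp_kronLeft (A : Matrix m₁ m₁ ℂ) :
    ptrace₂ ∘ₗ (kronLeft A : MatMap m₂ (m₁ × m₂)) = trashPrep A := by
  ext B : 1; ext i j
  simp [ptrace₂, kronLeft, trashPrep, Matrix.trace, Finset.mul_sum, mul_comm]

end TracePreservation

section DualMap

variable [Fintype n] [DecidableEq n] [Fintype m]

def dualMapₗ (M : Matrix m m ℂ) : MatMap n m →ₗ[ℂ] Matrix n n ℂ where
  toFun Φ := dualMap Φ M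
  map_add' Φ Ψ := by ext; simp [dualMap, Matrix.add_mul]
  map_smul' c Φ := by ext; simp [dualMap]

lemma dualMapₗ_apply (M : Matrix m m ℂ) (Φ : MatMap n m) : dualMapₗ M Φ = dualMap Φ M := rfl

variable [DecidableEq m]

lemma dualMap_comp_one_of_isTP [Fintype m₁] [DecidableEq m₁] {Ψ : MatMap m m₁} (hΨ : IsTP Ψ)
    (Φ : MatMap n m) : dualMap (Ψ ∘ₗ Φ) 1 = dualMap Φ 1 := by
  ext i j
  simp [dualMap, hΨ _]

lemma IsTP.dualMap_one {Φ : MatMap n m} (hΦ : IsTP Φ) : dualMap Φ 1 = 1 := by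
  ext i j
  by_cases h : i = j
  · subst h
    simp [dualMap, hΦ _, trace_single_eq_same]
  · simp [dualMap, hΦ _, h, trace_single_eq_of_ne _ _ _ (Ne.symm h)]

lemma IsCP.dualMap_one_posSemidef {Φ : MatMap n m} (hΦ : IsCP Φ) : (dualMap Φ 1).PosSemidef := by
  have : dualMap Φ 1 = ∑ k, (choi Φ)ᵀ.submatrix (fun i => (i, k)) (fun j => (j, k)) := by
    ext i j
    simp [dualMap, choi, Matrix.trace, Matrix.sum_apply]
  rw [this]
  exact posSemidef_sum _ fun k _ => (PosSemidef.transpose hΦ).submatrix _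

lemma Instrument.isPOVM_inducedPOVM [Fintype ι] (I : Instrument ι n m) :
    IsPOVM (inducedPOVM I) := by
  refine ⟨fun x => (I.cp x).dualMap_one_posSemidef, ?_⟩
  simp_rw [inducedPOVM, ← dualMapₗ_apply, ← map_sum]
  exact I.tp.dualMap_one

end DualMap

lemma exists_isState [Fintype m] [DecidableEq m] [Nonempty m] :
    ∃ η : Matrix m m ℂ, IsState η := by
  refine ⟨(Fintype.card m : ℂ)⁻¹ • 1, PosSemidef.one.smul (by positivity), ?_⟩
  simp [trace_one]

namespace Instrument

variable [Fintype n] [DecidableEq n]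

lemma nonempty_index [Fintype ι] [Fintype m] [Nonempty n] (I : Instrument ι n m) :
    Nonempty ι := by
  by_contra h
  rw [not_nonempty_iff] at h
  exact I.tp.ne_zero (by simp)

lemma nonempty_output [Fintype ι] [Fintype m] [Nonempty n] (I : Instrument ι n m) :
    Nonempty m := by
  by_contra h
  rw [not_nonempty_iff] at h
  exact I.tp.ne_zero (Subsingleton.elim _ _)

def prepare [Fintype ι] [DecidableEq ι] [Fintype m] (x₀ : ι) {η : Matrix m m ℂ}
    (hη : IsState η) : Instrument ι n m where
  op x := if x = x₀ then trashPrep η else 0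
  cp _ := isCP_ite (isCP_trashPrep hη.1)
  tp ρ := by simp [Finset.sum_ite_eq', trace_trashPrep, hη.2]

noncomputable def avg [Fintype ι] [Fintype m] (I I' : Instrument ι n m) : Instrument ι n m where
  op x := (2 : ℂ)⁻¹ • (I.op x + I'.op x)
  cp x := ((I.cp x).add (I'.cp x)).smul (by rw [inv_nonneg]; norm_num)
  tp ρ := by
    rw [← Finset.smul_sum, Finset.sum_add_distrib]
    simp only [LinearMap.smul_apply, LinearMap.add_apply, trace_smul, trace_add, I.tp ρ, I'.tp ρ]
    ring

variable [Fintype m₁] [Fintype m₂]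

section AppendRight

variable [Fintype ι₁] [Fintype ι₂] [DecidableEq ι₂] (I : Instrument ι₁ n m₁) (y₀ : ι₂)
  {η : Matrix m₂ m₂ ℂ} (hη : IsState η)

def appendRight : Instrument (ι₁ × ι₂) n (m₁ × m₂) where
  op p := if p.2 = y₀ then kronRight η ∘ₗ I.op p.1 else 0
  cp p := isCP_ite ((I.cp p.1).kronRight_comp hη.1)
  tp := by
    simpa [Fintype.sum_prod_type, Finset.sum_ite_eq', LinearMap.comp_finsetSum] using
      (isTP_kronRight hη.2).comp I.tp

lemma sum_ptrace₂_appendRight (x : ι₁) :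
    ∑ y, ptrace₂ ∘ₗ (I.appendRight y₀ hη).op (x, y) = I.op x := by
  simp [appendRight, apply_ite (LinearMap.comp ptrace₂), ← LinearMap.comp_assoc,
    ptrace₂_comp_kronRight, hη.2]

lemma sum_ptrace₁_appendRight (y : ι₂) :
    ∑ x, ptrace₁ ∘ₗ (I.appendRight y₀ hη).op (x, y) = (prepare y₀ hη).op y := by
  by_cases h : y = y₀
  · simp only [appendRight, prepare, h, if_true, ← LinearMap.comp_assoc, ptrace₁_comp_kronRight]
    rw [← LinearMap.comp_finsetSum, trashPrep_comp_of_isTP _ I.tp]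
  · simp [appendRight, prepare, h]

end AppendRight

section AppendLeft

variable [Fintype ι₁] [DecidableEq ι₁] [Fintype ι₂] (x₀ : ι₁) {η : Matrix m₁ m₁ ℂ}
  (hη : IsState η) (I : Instrument ι₂ n m₂)

def appendLeft : Instrument (ι₁ × ι₂) n (m₁ × m₂) where
  op p := if p.1 = x₀ then kronLeft η ∘ₗ I.op p.2 else 0
  cp p := isCP_ite ((I.cp p.2).kronLeft_comp hη.1)
  tp := by
    simpa [Fintype.sum_prod_type_right, Finset.sum_ite_eq', LinearMap.comp_finsetSum] using
      (isTP_kronLeft hη.2).comp I.tp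

lemma sum_ptrace₁_appendLeft (y : ι₂) :
    ∑ x, ptrace₁ ∘ₗ (appendLeft x₀ hη I).op (x, y) = I.op y := by
  simp [appendLeft, apply_ite (LinearMap.comp ptrace₁), ← LinearMap.comp_assoc,
    ptrace₁_comp_kronLeft, hη.2]

lemma sum_ptrace₂_appendLeft (x : ι₁) :
    ∑ y, ptrace₂ ∘ₗ (appendLeft x₀ hη I).op (x, y) = (prepare x₀ hη).op x := by
  by_cases h : x = x₀
  · simp only [appendLeft, prepare, h, if_true, ← LinearMap.comp_assoc, ptrace₂_comp_kronLeft]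
    rw [← LinearMap.comp_finsetSum, trashPrep_comp_of_isTP _ I.tp]
  · simp [appendLeft, prepare, h]

end AppendLeft

end Instrument

lemma exists_noisy_parallelCompatible [Fintype ι₁] [Fintype ι₂] [Fintype n] [DecidableEq n]
    [Fintype m₁] [Fintype m₂] (I₁ : Instrument ι₁ n m₁) (I₂ : Instrument ι₂ n m₂) :
    ∃ r : ℝ, 0 ≤ r ∧ ∃ (N₁ : Instrument ι₁ n m₁) (N₂ : Instrument ι₂ n m₂)
      (J : Instrument (ι₁ × ι₂) n (m₁ × m₂)),
      (∀ x, ((1 + r : ℝ) : ℂ)⁻¹ • (I₁.op x + (r : ℂ) • N₁.op x) = ∑ y, ptrace₂ ∘ₗ J.op (x, y)) ∧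
      (∀ y, ((1 + r : ℝ) : ℂ)⁻¹ • (I₂.op y + (r : ℂ) • N₂.op y) = ∑ x, ptrace₁ ∘ₗ J.op (x, y)) := by
  classical
  rcases isEmpty_or_nonempty n with hn | hn
  · have hJ : IsTP (∑ _ : ι₁ × ι₂, (0 : MatMap n (m₁ × m₂))) := fun ρ => by
      simp [Subsingleton.elim ρ 0]
    exact ⟨0, le_rfl, I₁, I₂, ⟨0, fun _ => isCP_zero, hJ⟩,
      fun _ => Subsingleton.elim _ _, fun _ => Subsingleton.elim _ _⟩
  obtain ⟨x₀⟩ := I₁.nonempty_index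
  obtain ⟨y₀⟩ := I₂.nonempty_index
  have := I₁.nonempty_output
  have := I₂.nonempty_output
  obtain ⟨η₁, hη₁⟩ := exists_isState (m := m₁)
  obtain ⟨η₂, hη₂⟩ := exists_isState (m := m₂)
  refine ⟨1, zero_le_one, .prepare x₀ hη₁, .prepare y₀ hη₂,
    (I₁.appendRight y₀ hη₂).avg (.appendLeft x₀ hη₁ I₂), fun x => ?_, fun y => ?_⟩
  · simp only [Instrument.avg, LinearMap.comp_smul, LinearMap.comp_add, ← Finset.smul_sum,
      Finset.sum_add_distrib, Instrument.sum_ptrace₂_appendRight,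
      Instrument.sum_ptrace₂_appendLeft]
    norm_num
  · simp only [Instrument.avg, LinearMap.comp_smul, LinearMap.comp_add, ← Finset.smul_sum,
      Finset.sum_add_distrib, Instrument.sum_ptrace₁_appendRight,
      Instrument.sum_ptrace₁_appendLeft]
    norm_num [add_comm]

end QI

open QI in
/-- `R_I(I₁,I₂) ≥ R_M(A₁,A₂)` for the induced POVMs. -/
theorem RI_ge_RM {ι₁ ι₂ n m₁ m₂ : Type*}
    [Fintype ι₁] [Fintype ι₂] [Fintype n] [DecidableEq n]
    [Fintype m₁] [DecidableEq m₁] [Fintype m₂] [DecidableEq m₂]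
    (I₁ : Instrument ι₁ n m₁) (I₂ : Instrument ι₂ n m₂) :
    RM (inducedPOVM I₁) (inducedPOVM I₂) ≤ RI I₁ I₂ := by
  refine csInf_le_csInf ⟨0, fun r hr => hr.1⟩ (exists_noisy_parallelCompatible I₁ I₂) ?_
  rintro r ⟨hr, N₁, N₂, J, h₁, h₂⟩
  refine ⟨hr, inducedPOVM N₁, inducedPOVM N₂, inducedPOVM J, N₁.isPOVM_inducedPOVM,
    N₂.isPOVM_inducedPOVM, fun p => (J.cp p).dualMap_one_posSemidef, fun x => ?_, fun y => ?_⟩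
  · have h := congrArg (dualMapₗ 1) (h₁ x)
    simp only [map_smul, map_add, map_sum, dualMapₗ_apply,
      dualMap_comp_one_of_isTP isTP_ptrace₂] at h
    exact h
  · have h := congrArg (dualMapₗ 1) (h₂ y)
    simp only [map_smul, map_add, map_sum, dualMapₗ_apply,
      dualMap_comp_one_of_isTP isTP_ptrace₁] at h
    exact h
end

section
/- Post-processing preserves parallel compatibility: if instruments I₁ and I₂ are parallel compatible, and Ĩ₁ ≲ I₁ and Ĩ₂ ≲ I₂ are post-processings of them, then Ĩ₁ and Ĩ₂ are parallel compatible. -/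
open Matrix
open scoped Kronecker BigOperators ComplexOrder

/-! Given a joint instrument `J` for `I₁, I₂` and post-processings `R¹ˣ`, `R²ʸ`, the family
`Σ_{x,y} (R¹ˣ_{x̃} ⊗ R²ʸ_{ỹ}) ∘ J_{xy}` is a joint instrument for the post-processed pair.
It is completely positive because CP maps are exactly the sums of Kraus conjugations
`ρ ↦ K ρ Kᴴ`, which are closed under composition and tensor products. Summing over `ỹ` and
tracing out the second output turns `R²ʸ` into the channel `Σ_ỹ R²ʸ_ỹ`, and
`tr₂ ∘ (Φ ⊗ Ψ) = Φ ∘ tr₂` whenever `Ψ` is trace preserving; so the first marginal is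
`Σ_x R¹ˣ_{x̃} ∘ I₁ₓ`, and symmetrically for the second. Trace preservation of the joint family
is inherited from that of its marginal. -/

namespace LinearMap

variable {R M N P ι : Type*} [CommSemiring R] [AddCommMonoid M] [AddCommMonoid N]
  [AddCommMonoid P] [Module R M] [Module R N] [Module R P]

theorem finsetSum_comp (s : Finset ι) (f : ι → N →ₗ[R] P) (g : M →ₗ[R] N) :
    (∑ i ∈ s, f i) ∘ₗ g = ∑ i ∈ s, f i ∘ₗ g := by
  ext x
  simp [sum_apply]

theorem comp_finsetSum_s7 (s : Finset ι) (f : N →ₗ[R] P) (g : ι → M →ₗ[R] N) :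
    f ∘ₗ (∑ i ∈ s, g i) = ∑ i ∈ s, f ∘ₗ g i := by
  ext x
  simp [sum_apply]

end LinearMap

namespace QI

open Matrix

variable {n m p m₁ m₂ k₁ k₂ : Type*}

section Choi

variable [Fintype n] [DecidableEq n] [Fintype m]

theorem choi_injective : Function.Injective (choi : MatMap n m → _) := by
  intro Φ Ψ h
  refine Matrix.ext_linearMap ℂ fun i j => LinearMap.ext_ring ?_
  ext s t
  exact congrFun (congrFun h (i, s)) (j, t)

theorem choi_sum {ι : Type*} (s : Finset ι) (Φ : ι → MatMap n m) :
    choi (∑ i ∈ s, Φ i) = ∑ i ∈ s, choi (Φ i) := by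
  ext p q
  simp [choi, LinearMap.sum_apply, Matrix.sum_apply]

theorem isCP_sum {ι : Type*} (s : Finset ι) (Φ : ι → MatMap n m) (h : ∀ i ∈ s, IsCP (Φ i)) :
    IsCP (∑ i ∈ s, Φ i) := by
  rw [IsCP, choi_sum]
  exact posSemidef_sum s h

theorem choi_krausOp (K : Matrix m n ℂ) :
    choi (krausOp K) = vecMulVec (fun p => K p.2 p.1) (star fun p => K p.2 p.1) := by
  ext ⟨i, s⟩ ⟨j, t⟩
  simp [choi, krausOp, vecMulVec_apply, mul_apply, single_apply, ite_and]

theorem isCP_krausOp (K : Matrix m n ℂ) : IsCP (krausOp K) := by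
  rw [IsCP, choi_krausOp]
  exact posSemidef_vecMulVec_self_star _

theorem IsCP.exists_kraus {Φ : MatMap n m} (h : IsCP Φ) :
    ∃ (r : ℕ) (K : Fin r → Matrix m n ℂ), Φ = ∑ a, krausOp (K a) := by
  obtain ⟨r, v, hv⟩ := posSemidef_iff_eq_sum_vecMulVec.mp h
  refine ⟨r, fun a => of fun s i => v a (i, s), choi_injective ?_⟩
  rw [hv, choi_sum]
  simp only [choi_krausOp]
  rfl

end Choi

theorem krausOp_comp [Fintype n] [Fintype m] [Fintype p] (K : Matrix m n ℂ) (L : Matrix p m ℂ) :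
    krausOp L ∘ₗ krausOp K = krausOp (L * K) := by
  ext ρ : 1
  simp [krausOp, Matrix.mul_assoc]

theorem isCP_comp [Fintype n] [DecidableEq n] [Fintype m] [DecidableEq m] [Fintype p]
    {Φ : MatMap n m} {Ψ : MatMap m p} (hΦ : IsCP Φ) (hΨ : IsCP Ψ) : IsCP (Ψ ∘ₗ Φ) := by
  obtain ⟨r, K, rfl⟩ := hΦ.exists_kraus
  obtain ⟨s, L, rfl⟩ := hΨ.exists_kraus
  simp only [LinearMap.finsetSum_comp, LinearMap.comp_finsetSum_s7, krausOp_comp]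
  exact isCP_sum _ _ fun b _ => isCP_sum _ _ fun a _ => isCP_krausOp _

section PartialTrace

variable [Fintype m₁] [Fintype m₂]

theorem ptrace₂_kronecker (A : Matrix m₁ m₁ ℂ) (B : Matrix m₂ m₂ ℂ) :
    ptrace₂ (A ⊗ₖ B) = B.trace • A := by
  ext i j
  simp [ptrace₂, trace, Finset.mul_sum, mul_comm]

theorem ptrace₁_kronecker (A : Matrix m₁ m₁ ℂ) (B : Matrix m₂ m₂ ℂ) :
    ptrace₁ (A ⊗ₖ B) = A.trace • B := by
  ext i j
  simp [ptrace₁, trace, Finset.sum_mul]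

theorem trace_ptrace₂ (M : Matrix (m₁ × m₂) (m₁ × m₂) ℂ) : (ptrace₂ M).trace = M.trace :=
  (Fintype.sum_prod_type fun p => M p p).symm

theorem IsTP.of_ptrace₂_comp [Fintype n] {Λ : MatMap n (m₁ × m₂)} (h : IsTP (ptrace₂ ∘ₗ Λ)) :
    IsTP Λ := fun ρ => by
  rw [← trace_ptrace₂, ← h ρ, LinearMap.comp_apply]

end PartialTrace

section Tensor

variable [Fintype m₁] [DecidableEq m₁] [Fintype m₂] [DecidableEq m₂]

theorem kronecker_linearMap_ext {M : Type*} [AddCommMonoid M] [Module ℂ M]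
    {f g : Matrix (m₁ × m₂) (m₁ × m₂) ℂ →ₗ[ℂ] M} (h : ∀ A B, f (A ⊗ₖ B) = g (A ⊗ₖ B)) :
    f = g :=
  (LinearMap.cancel_right (kroneckerLinearEquiv m₁ m₁ m₂ m₂ ℂ).surjective).mp
    (TensorProduct.ext' h)

variable [Fintype k₁] [DecidableEq k₁] [Fintype k₂] [DecidableEq k₂]

def tensorMap : MatMap m₁ k₁ →ₗ[ℂ] MatMap m₂ k₂ →ₗ[ℂ] MatMap (m₁ × m₂) (k₁ × k₂) :=
  (TensorProduct.mapBilinear (RingHom.id ℂ) _ _ _ _).compr₂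
    (LinearEquiv.arrowCongr (kroneckerLinearEquiv m₁ m₁ m₂ m₂ ℂ)
      (kroneckerLinearEquiv k₁ k₁ k₂ k₂ ℂ)).toLinearMap

theorem tensorMap_kronecker (Φ : MatMap m₁ k₁) (Ψ : MatMap m₂ k₂) (A : Matrix m₁ m₁ ℂ)
    (B : Matrix m₂ m₂ ℂ) : tensorMap Φ Ψ (A ⊗ₖ B) = Φ A ⊗ₖ Ψ B := by
  simp [tensorMap, LinearEquiv.arrowCongr_apply]

theorem tensorMap_krausOp (K : Matrix k₁ m₁ ℂ) (L : Matrix k₂ m₂ ℂ) :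
    tensorMap (krausOp K) (krausOp L) = krausOp (K ⊗ₖ L) :=
  kronecker_linearMap_ext fun A B => by
    simp [tensorMap_kronecker, krausOp, mul_kronecker_mul, conjTranspose_kronecker]

theorem isCP_tensorMap {Φ : MatMap m₁ k₁} {Ψ : MatMap m₂ k₂} (hΦ : IsCP Φ) (hΨ : IsCP Ψ) :
    IsCP (tensorMap Φ Ψ) := by
  obtain ⟨r, K, rfl⟩ := hΦ.exists_kraus
  obtain ⟨s, L, rfl⟩ := hΨ.exists_kraus
  simp only [map_sum, LinearMap.sum_apply, tensorMap_krausOp]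
  exact isCP_sum _ _ fun a _ => isCP_sum _ _ fun b _ => isCP_krausOp _

theorem ptrace₂_comp_tensorMap (Φ : MatMap m₁ k₁) {Ψ : MatMap m₂ k₂} (hΨ : IsTP Ψ) :
    ptrace₂ ∘ₗ tensorMap Φ Ψ = Φ ∘ₗ ptrace₂ :=
  kronecker_linearMap_ext fun A B => by
    simp [tensorMap_kronecker, ptrace₂_kronecker, hΨ B]

theorem ptrace₁_comp_tensorMap {Φ : MatMap m₁ k₁} (hΦ : IsTP Φ) (Ψ : MatMap m₂ k₂) :
    ptrace₁ ∘ₗ tensorMap Φ Ψ = Ψ ∘ₗ ptrace₁ :=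
  kronecker_linearMap_ext fun A B => by
    simp [tensorMap_kronecker, ptrace₁_kronecker, hΦ A]

theorem sum_ptrace₂_comp_tensorMap {ι : Type*} [Fintype ι] (Φ : MatMap m₁ k₁)
    {Ψ : ι → MatMap m₂ k₂} (hΨ : IsTP (∑ i, Ψ i)) :
    ∑ i, ptrace₂ ∘ₗ tensorMap Φ (Ψ i) = Φ ∘ₗ ptrace₂ := by
  rw [← ptrace₂_comp_tensorMap Φ hΨ, map_sum, LinearMap.comp_finsetSum_s7]

theorem sum_ptrace₁_comp_tensorMap {ι : Type*} [Fintype ι] {Φ : ι → MatMap m₁ k₁}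
    (hΦ : IsTP (∑ i, Φ i)) (Ψ : MatMap m₂ k₂) :
    ∑ i, ptrace₁ ∘ₗ tensorMap (Φ i) Ψ = Ψ ∘ₗ ptrace₁ := by
  rw [← ptrace₁_comp_tensorMap hΦ Ψ, map_sum, LinearMap.sum_apply, LinearMap.comp_finsetSum_s7]

end Tensor

section PostProcessing

variable {ι₁ ι₂ κ₁ κ₂ : Type*} [Fintype ι₁] [Fintype ι₂] [Fintype κ₁] [Fintype κ₂]
  [Fintype n] [DecidableEq n] [Fintype m₁] [Fintype m₂]

theorem parallelCompatible_of_marginals {I₁ : Instrument ι₁ n m₁} {I₂ : Instrument ι₂ n m₂}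
    (Λ : ι₁ × ι₂ → MatMap n (m₁ × m₂)) (hΛ : ∀ p, IsCP (Λ p))
    (h₁ : ∀ x, ∑ y, ptrace₂ ∘ₗ Λ (x, y) = I₁.op x)
    (h₂ : ∀ y, ∑ x, ptrace₁ ∘ₗ Λ (x, y) = I₂.op y) :
    ParallelCompatible I₁ I₂ := by
  refine ⟨⟨Λ, hΛ, IsTP.of_ptrace₂_comp ?_⟩, h₁, h₂⟩
  rw [LinearMap.comp_finsetSum_s7, Fintype.sum_prod_type]
  simpa only [h₁] using I₁.tp

variable [DecidableEq m₁] [DecidableEq m₂] [Fintype k₁] [DecidableEq k₁] [Fintype k₂]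
  [DecidableEq k₂]

def jointPostProcessing (J : Instrument (ι₁ × ι₂) n (m₁ × m₂))
    (R₁ : ι₁ → Instrument κ₁ m₁ k₁) (R₂ : ι₂ → Instrument κ₂ m₂ k₂) (p : κ₁ × κ₂) :
    MatMap n (k₁ × k₂) :=
  ∑ x, ∑ y, tensorMap ((R₁ x).op p.1) ((R₂ y).op p.2) ∘ₗ J.op (x, y)

variable (J : Instrument (ι₁ × ι₂) n (m₁ × m₂))
  (R₁ : ι₁ → Instrument κ₁ m₁ k₁) (R₂ : ι₂ → Instrument κ₂ m₂ k₂)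

theorem isCP_jointPostProcessing (p : κ₁ × κ₂) : IsCP (jointPostProcessing J R₁ R₂ p) :=
  isCP_sum _ _ fun x _ => isCP_sum _ _ fun y _ =>
    isCP_comp (J.cp (x, y)) (isCP_tensorMap ((R₁ x).cp p.1) ((R₂ y).cp p.2))

theorem sum_ptrace₂_comp_jointPostProcessing (x' : κ₁) :
    ∑ y', ptrace₂ ∘ₗ jointPostProcessing J R₁ R₂ (x', y')
      = ∑ x, (R₁ x).op x' ∘ₗ ∑ y, ptrace₂ ∘ₗ J.op (x, y) :=
  calc _ = ∑ x, ∑ y,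
          (∑ y', ptrace₂ ∘ₗ tensorMap ((R₁ x).op x') ((R₂ y).op y')) ∘ₗ J.op (x, y) := by
        simp only [jointPostProcessing, LinearMap.comp_finsetSum_s7, LinearMap.finsetSum_comp,
          LinearMap.comp_assoc]
        rw [Finset.sum_comm]
        exact Finset.sum_congr rfl fun x _ => Finset.sum_comm
    _ = _ := by
        simp only [sum_ptrace₂_comp_tensorMap _ (R₂ _).tp, LinearMap.comp_finsetSum_s7,
          LinearMap.comp_assoc]

theorem sum_ptrace₁_comp_jointPostProcessing (y' : κ₂) :
    ∑ x', ptrace₁ ∘ₗ jointPostProcessing J R₁ R₂ (x', y')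
      = ∑ y, (R₂ y).op y' ∘ₗ ∑ x, ptrace₁ ∘ₗ J.op (x, y) :=
  calc _ = ∑ x, ∑ y,
          (∑ x', ptrace₁ ∘ₗ tensorMap ((R₁ x).op x') ((R₂ y).op y')) ∘ₗ J.op (x, y) := by
        simp only [jointPostProcessing, LinearMap.comp_finsetSum_s7, LinearMap.finsetSum_comp,
          LinearMap.comp_assoc]
        rw [Finset.sum_comm]
        exact Finset.sum_congr rfl fun x _ => Finset.sum_comm
    _ = _ := by
        rw [Finset.sum_comm]
        simp only [sum_ptrace₁_comp_tensorMap (R₁ _).tp _, LinearMap.comp_finsetSum_s7,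
          LinearMap.comp_assoc]

end PostProcessing

end QI

open QI in
/-- post-processing preserves parallel compatibility. -/
theorem postprocessing_preserves_compatibility
    {ι₁ ι₂ κ₁ κ₂ n m₁ m₂ k₁ k₂ : Type*}
    [Fintype ι₁] [Fintype ι₂] [Fintype κ₁] [Fintype κ₂]
    [Fintype n] [DecidableEq n]
    [Fintype m₁] [DecidableEq m₁] [Fintype m₂] [DecidableEq m₂]
    [Fintype k₁] [Fintype k₂]
    (I₁ : Instrument ι₁ n m₁) (I₂ : Instrument ι₂ n m₂)
    (J₁ : Instrument κ₁ n k₁) (J₂ : Instrument κ₂ n k₂)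
    (h : ParallelCompatible I₁ I₂)
    (h₁ : PostProcessingOf J₁ I₁) (h₂ : PostProcessingOf J₂ I₂) :
    ParallelCompatible J₁ J₂ := by
  classical
  obtain ⟨J, hJ₁, hJ₂⟩ := h
  obtain ⟨R₁, hR₁⟩ := h₁
  obtain ⟨R₂, hR₂⟩ := h₂
  refine parallelCompatible_of_marginals (jointPostProcessing J R₁ R₂)
    (isCP_jointPostProcessing J R₁ R₂) (fun x' => ?_) (fun y' => ?_)
  · simp only [sum_ptrace₂_comp_jointPostProcessing, hJ₁, hR₁]
  · simp only [sum_ptrace₁_comp_jointPostProcessing, hJ₂, hR₂]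
end
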